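/- arXiv:1405.3882 — 2 statements merged into one kernel-verified Lean document; each statement's English description precedes it below -/
import Mathlib

section
/- The measure γ_θ is invariant under T_θ: for every Borel set A ⊆ [0,θ], γ_θ(T_θ⁻¹(A)) = γ_θ(A). -/
/-!
For `0 ≤ a < θ`, the points of `(0, θ]` that `T_θ` sends into `[0, a]` form the disjoint intervals
`[1/(a + kθ), 1/(kθ)]`, `k ≥ m`; the first digit `⌊1/(xθ)⌋` is at least `m` because `θ² = 1/m`.
The density `θ/(1 + θx)` has primitive `log (1 + θx)`, which gives the `k`-th interval the mass
`log (1 + a/(kθ)) - log (1 + a/((k+1)θ))`. The series telescopes to `log (1 + a/(mθ)) = log (1 + θa)`,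
the mass of `[0, a]`. Both `γ_θ` and its image under `T_θ` are finite and live on `[0, θ]`, so
agreement on these intervals determines them.
-/

open MeasureTheory Real Set

/-- θ = 1/√m. -/
noncomputable def theta (m : ℕ) : ℝ := 1 / Real.sqrt m

/-- The θ-expansion transformation T_θ(x) = 1/x − θ·⌊1/(xθ)⌋ for x ≠ 0, T_θ(0) = 0. -/
noncomputable def Tmap (m : ℕ) (x : ℝ) : ℝ :=
  if x = 0 then 0 else 1 / x - theta m * (⌊1 / (x * theta m)⌋ : ℝ)

/-- The invariant measure γ_θ(A) = (1/log(1+θ²)) ∫_A θ/(1+θx) dx on [0,θ]. -/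
noncomputable def gammaMeasure (m : ℕ) : Measure ℝ :=
  (ENNReal.ofReal (1 / Real.log (1 + theta m ^ 2))) •
    ((volume.restrict (Icc 0 (theta m))).withDensity
      fun x => ENNReal.ofReal (theta m / (1 + theta m * x)))

open Filter Topology Function

theorem ENNReal.tsum_ofReal_sub_succ {f : ℕ → ℝ} (hf : Antitone f)
    (hlim : Tendsto f atTop (𝓝 0)) :
    ∑' n, ENNReal.ofReal (f n - f (n + 1)) = ENNReal.ofReal (f 0) := by
  have hnonneg : ∀ n, 0 ≤ f n - f (n + 1) := fun n => sub_nonneg.2 (hf n.le_succ)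
  have hsum : HasSum (fun n => f n - f (n + 1)) (f 0) := by
    rw [hasSum_iff_tendsto_nat_of_nonneg hnonneg]
    simp only [Finset.sum_range_sub']
    simpa using tendsto_const_nhds.sub hlim
  rw [← ENNReal.ofReal_tsum_of_nonneg hnonneg hsum.summable, hsum.tsum_eq]

theorem MeasureTheory.Measure.ext_of_Iic_of_compl_Icc {α : Type*} [TopologicalSpace α] [MeasurableSpace α]
    [SecondCountableTopology α] [LinearOrder α] [OrderTopology α] [BorelSpace α]
    {μ ν : Measure α} [IsFiniteMeasure μ] {p q : α}
    (hμ : μ (Icc p q)ᶜ = 0) (hν : ν (Icc p q)ᶜ = 0) (huniv : μ univ = ν univ)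
    (h : ∀ a ∈ Ico p q, μ (Iic a) = ν (Iic a)) : μ = ν := by
  refine Measure.ext_of_Iic μ ν fun a => ?_
  rcases lt_or_ge a p with hap | hpa
  · have hsub : Iic a ⊆ (Icc p q)ᶜ := fun x hx hx' => (hx.trans_lt hap).not_ge hx'.1
    rw [measure_mono_null hsub hμ, measure_mono_null hsub hν]
  rcases lt_or_ge a q with haq | hqa
  · exact h a ⟨hpa, haq⟩
  · have hsub : (Iic a)ᶜ ⊆ (Icc p q)ᶜ := compl_subset_compl.2 fun x hx => hx.2.trans hqa
    rwa [measure_congr (ae_eq_univ.2 (measure_mono_null hsub hμ)),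
      measure_congr (ae_eq_univ.2 (measure_mono_null hsub hν))]

theorem lintegral_Icc_div_one_add_mul {t p q : ℝ} (ht : 0 ≤ t) (hp : 0 ≤ p) (hpq : p ≤ q) :
    ∫⁻ x in Icc p q, ENNReal.ofReal (t / (1 + t * x)) =
      ENNReal.ofReal (log (1 + t * q) - log (1 + t * p)) := by
  have hpos : ∀ x ∈ Icc p q, 0 < 1 + t * x := fun x hx => by nlinarith [hx.1]
  have hcont : ContinuousOn (fun x => t / (1 + t * x)) (Icc p q) :=
    continuousOn_const.div (by fun_prop) fun x hx => (hpos x hx).ne'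
  have hderiv : ∀ x ∈ uIcc p q, HasDerivAt (fun x => log (1 + t * x)) (t / (1 + t * x)) x := by
    intro x hx
    rw [uIcc_of_le hpq] at hx
    simpa using ((hasDerivAt_id x).const_mul t).const_add 1 |>.log (hpos x hx).ne'
  have hint : IntervalIntegrable (fun x => t / (1 + t * x)) volume p q :=
    (hcont.mono (uIcc_of_le hpq).subset).intervalIntegrable
  rw [← intervalIntegral.integral_eq_sub_of_hasDerivAt hderiv hint,
    intervalIntegral.integral_of_le hpq, ← integral_Icc_eq_integral_Ioc,
    ofReal_integral_eq_lintegral_ofReal hcont.integrableOn_Icc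
      ((ae_restrict_iff' measurableSet_Icc).2 (Eventually.of_forall
        fun x hx => div_nonneg ht (hpos x hx).le))]

theorem antitone_log_one_add_div_mul {a θ c : ℝ} (ha : 0 ≤ a) (hθ : 0 < θ) (hc : 0 < c) :
    Antitone fun n : ℕ => log (1 + a / ((n + c) * θ)) :=
  antitone_nat_of_succ_le fun n => by
    gcongr
    exact n.le_succ

theorem tendsto_log_one_add_div_mul {a θ : ℝ} (hθ : 0 < θ) (c : ℝ) :
    Tendsto (fun n : ℕ => log (1 + a / ((n + c) * θ))) atTop (𝓝 0) := by
  have hden : Tendsto (fun n : ℕ => ((n : ℝ) + c) * θ) atTop atTop :=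
    (tendsto_atTop_add_const_right _ c tendsto_natCast_atTop_atTop).atTop_mul_const hθ
  have harg : Tendsto (fun n : ℕ => 1 + a / ((n + c) * θ)) atTop (𝓝 1) := by
    simpa using tendsto_const_nhds.add (tendsto_const_nhds.div_atTop hden)
  simpa only [log_one, comp_def] using (continuousAt_log one_ne_zero).tendsto.comp harg

/-- For `0 ≤ a < θ` and `k > 0`: the points with first digit `⌊1/(xθ)⌋ = k` that the θ-expansion
map sends into `[0, a]`. -/
def digitIcc (θ a k : ℝ) : Set ℝ := Icc (1 / (a + k * θ)) (1 / (k * θ))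

section digitIcc

variable {θ a x : ℝ}

theorem mem_digitIcc_iff {k : ℤ} (hθ : 0 < θ) (ha : 0 ≤ a) (haθ : a < θ) (hk : 0 < k)
    (hx : 0 < x) : x ∈ digitIcc θ a k ↔ ⌊1 / (x * θ)⌋ = k ∧ 1 / x - θ * k ≤ a := by
  have hk' : (0 : ℝ) < k := by exact_mod_cast hk
  have hy : θ * (1 / (x * θ)) = 1 / x := by field_simp
  have hlow : 1 / (a + k * θ) ≤ x ↔ 1 / x - θ * k ≤ a := by
    rw [div_le_iff₀ (by positivity), sub_le_iff_le_add, div_le_iff₀ hx]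
    constructor <;> intro h <;> linarith
  have hup : x ≤ 1 / (k * θ) ↔ (k : ℝ) ≤ 1 / (x * θ) := by
    rw [le_div_iff₀ (by positivity), le_div_iff₀ (by positivity)]
    constructor <;> intro h <;> linarith
  rw [digitIcc, mem_Icc, hlow, hup, Int.floor_eq_iff]
  constructor
  · rintro ⟨hl, hu⟩
    have hlt : θ * (1 / (x * θ)) < θ * (k + 1) := by rw [hy]; linarith
    exact ⟨⟨hu, lt_of_mul_lt_mul_left hlt hθ.le⟩, hl⟩
  · rintro ⟨⟨hu, -⟩, hl⟩
    exact ⟨hl, hu⟩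

theorem pos_of_mem_digitIcc {k : ℝ} (ha : 0 ≤ a) (hθ : 0 < θ) (hk : 0 < k)
    (hx : x ∈ digitIcc θ a k) : 0 < x :=
  lt_of_lt_of_le (by positivity) hx.1

theorem lintegral_digitIcc {k : ℝ} (hθ : 0 < θ) (ha : 0 ≤ a) (hk : 0 < k) :
    ∫⁻ x in digitIcc θ a k, ENNReal.ofReal (θ / (1 + θ * x)) =
      ENNReal.ofReal (log (1 + a / (k * θ)) - log (1 + a / ((k + 1) * θ))) := by
  rw [digitIcc, lintegral_Icc_div_one_add_mul hθ.le (by positivity)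
    (one_div_le_one_div_of_le (by positivity) (by linarith))]
  congr 1
  rw [sub_eq_sub_iff_add_eq_add, ← log_mul (by positivity) (by positivity),
    ← log_mul (by positivity) (by positivity)]
  congr 1
  field_simp
  ring

theorem pairwise_disjoint_digitIcc (hθ : 0 < θ) (ha : 0 ≤ a) (haθ : a < θ) {c : ℕ} (hc : 0 < c) :
    Pairwise (Disjoint on fun n : ℕ => digitIcc θ a (n + c)) := by
  intro i j hij
  refine disjoint_left.2 fun x hi hj => hij ?_
  have hx := pos_of_mem_digitIcc ha hθ (by positivity) hi
  have hcast (n : ℕ) : (n : ℝ) + c = ((n + c : ℕ) : ℤ) := by push_cast; ring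
  simp only [hcast] at hi hj
  rw [mem_digitIcc_iff hθ ha haθ (by omega) hx] at hi
  rw [mem_digitIcc_iff hθ ha haθ (by omega) hx] at hj
  exact Nat.add_right_cancel (by exact_mod_cast hi.1.symm.trans hj.1)

end digitIcc

theorem theta_sq (m : ℕ) : theta m ^ 2 = (m : ℝ)⁻¹ := by
  rw [theta, div_pow, sq_sqrt m.cast_nonneg, one_pow, one_div]

section theta

variable {m : ℕ}

theorem theta_pos (hm : 0 < m) : 0 < theta m :=
  one_div_pos.2 (sqrt_pos.2 (by exact_mod_cast hm))

theorem natCast_mul_theta (hm : 0 < m) : (m : ℝ) * theta m = 1 / theta m := by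
  have hθ := theta_pos hm
  have hm' : (m : ℝ) ≠ 0 := by exact_mod_cast hm.ne'
  field_simp
  rw [theta_sq, mul_inv_cancel₀ hm']

theorem Tmap_eq_mul_fract (hm : 0 < m) {x : ℝ} (hx : x ≠ 0) :
    Tmap m x = theta m * Int.fract (1 / (x * theta m)) := by
  have hθ := (theta_pos hm).ne'
  rw [Tmap, if_neg hx, Int.fract, mul_sub]
  field_simp

theorem Tmap_mem_Icc (hm : 0 < m) (x : ℝ) : Tmap m x ∈ Icc 0 (theta m) := by
  have hθ := theta_pos hm
  rcases eq_or_ne x 0 with rfl | hx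
  · simp [Tmap, hθ.le]
  · rw [Tmap_eq_mul_fract hm hx]
    exact ⟨by positivity, mul_le_of_le_one_right hθ.le (Int.fract_lt_one _).le⟩

theorem measurable_Tmap (m : ℕ) : Measurable (Tmap m) := by
  have hinv : Measurable fun x : ℝ => 1 / x := by simpa only [one_div] using measurable_inv
  have hfloor : Measurable fun x : ℝ => (⌊1 / (x * theta m)⌋ : ℝ) :=
    measurable_from_top.comp (hinv.comp (measurable_id.mul_const _)).floor
  exact Measurable.ite (measurableSet_singleton 0) measurable_const
    (hinv.sub (hfloor.const_mul _))

theorem natCast_le_one_div_mul_theta (hm : 0 < m) {x : ℝ} (hx : x ∈ Ioc 0 (theta m)) :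
    (m : ℝ) ≤ 1 / (x * theta m) := by
  have hθ := theta_pos hm
  rw [le_div_iff₀ (mul_pos hx.1 hθ)]
  calc (m : ℝ) * (x * theta m) ≤ m * (theta m * theta m) := by gcongr; exact hx.2
    _ = 1 := by rw [← mul_assoc, natCast_mul_theta hm, one_div_mul_cancel hθ.ne']

theorem preimage_Tmap_Iic_inter_Icc (hm : 0 < m) {a : ℝ} (ha : 0 ≤ a) (haθ : a < theta m) :
    Tmap m ⁻¹' Iic a ∩ Icc 0 (theta m) =
      insert 0 (⋃ n : ℕ, digitIcc (theta m) a (n + m)) := by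
  have hθ := theta_pos hm
  ext x
  rcases eq_or_ne x 0 with rfl | hx0
  · simp [Tmap, ha, hθ.le]
  simp only [mem_inter_iff, mem_preimage, mem_Iic, mem_insert_iff, hx0, false_or, mem_iUnion]
  constructor
  · rintro ⟨hTx, hx⟩
    have hx' : x ∈ Ioc 0 (theta m) := ⟨hx.1.lt_of_ne' hx0, hx.2⟩
    obtain ⟨n, hn⟩ := Int.le.dest (Int.le_floor.2 (natCast_le_one_div_mul_theta hm hx'))
    refine ⟨n, ?_⟩
    have hk : ((n : ℝ) + m) = ((⌊1 / (x * theta m)⌋ : ℤ) : ℝ) := by rw [← hn]; push_cast; ring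
    rw [hk, mem_digitIcc_iff hθ ha haθ (by omega) hx'.1]
    rw [Tmap, if_neg hx0] at hTx
    exact ⟨rfl, hTx⟩
  · rintro ⟨n, hn⟩
    have hk : ((n : ℝ) + m) = (((n + m : ℕ) : ℤ) : ℝ) := by push_cast; ring
    have hxpos := pos_of_mem_digitIcc ha hθ (by positivity) hn
    have hxθ : x ≤ theta m := by
      calc x ≤ 1 / ((n + m) * theta m) := hn.2
        _ ≤ 1 / (m * theta m) := by gcongr; linarith [(n.cast_nonneg : (0 : ℝ) ≤ n)]
        _ = theta m := by rw [natCast_mul_theta hm, one_div_one_div]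
    rw [hk, mem_digitIcc_iff hθ ha haθ (by omega) hxpos] at hn
    refine ⟨?_, hxpos.le, hxθ⟩
    rw [Tmap, if_neg hx0, hn.1]
    exact hn.2

end theta

section gammaMeasure

variable {m : ℕ}

theorem gammaMeasure_apply (m : ℕ) {B : Set ℝ} (hB : MeasurableSet B) :
    gammaMeasure m B = ENNReal.ofReal (1 / log (1 + theta m ^ 2)) *
      ∫⁻ x in B ∩ Icc 0 (theta m), ENNReal.ofReal (theta m / (1 + theta m * x)) := by
  rw [gammaMeasure, Measure.smul_apply, smul_eq_mul, withDensity_apply _ hB,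
    Measure.restrict_restrict hB]

theorem isFiniteMeasure_gammaMeasure (hm : 0 < m) : IsFiniteMeasure (gammaMeasure m) := by
  constructor
  rw [gammaMeasure_apply m MeasurableSet.univ, univ_inter,
    lintegral_Icc_div_one_add_mul (theta_pos hm).le le_rfl (theta_pos hm).le]
  exact ENNReal.mul_lt_top ENNReal.ofReal_lt_top ENNReal.ofReal_lt_top

theorem gammaMeasure_compl_Icc (m : ℕ) : gammaMeasure m (Icc 0 (theta m))ᶜ = 0 := by
  rw [gammaMeasure_apply m measurableSet_Icc.compl, compl_inter_self, Measure.restrict_empty,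
    lintegral_zero_measure, mul_zero]

theorem gammaMeasure_preimage_Iic (hm : 0 < m) {a : ℝ} (ha : 0 ≤ a) (haθ : a < theta m) :
    gammaMeasure m (Tmap m ⁻¹' Iic a) = gammaMeasure m (Iic a) := by
  have hθ := theta_pos hm
  set θ := theta m
  set f : ℕ → ℝ := fun n => log (1 + a / ((n + m) * θ))
  have hf : Antitone f := antitone_log_one_add_div_mul ha hθ (by exact_mod_cast hm)
  have hf0 : f 0 = log (1 + θ * a) := by
    simp only [f, Nat.cast_zero, zero_add]
    rw [natCast_mul_theta hm, div_div_eq_mul_div, div_one, mul_comm]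
  rw [gammaMeasure_apply m ((measurable_Tmap m) measurableSet_Iic),
    gammaMeasure_apply m measurableSet_Iic]
  congr 1
  calc ∫⁻ x in Tmap m ⁻¹' Iic a ∩ Icc 0 θ, ENNReal.ofReal (θ / (1 + θ * x))
      = ∫⁻ x in ⋃ n : ℕ, digitIcc θ a (n + m), ENNReal.ofReal (θ / (1 + θ * x)) := by
        rw [preimage_Tmap_Iic_inter_Icc hm ha haθ]
        exact setLIntegral_congr (insert_ae_eq_self _ _)
    _ = ∑' n : ℕ, ∫⁻ x in digitIcc θ a (n + m), ENNReal.ofReal (θ / (1 + θ * x)) :=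
        lintegral_iUnion (fun _ => measurableSet_Icc) (pairwise_disjoint_digitIcc hθ ha haθ hm) _
    _ = ∑' n : ℕ, ENNReal.ofReal (f n - f (n + 1)) := by
        refine tsum_congr fun n => ?_
        rw [lintegral_digitIcc hθ ha (by positivity)]
        simp only [f]
        push_cast
        ring_nf
    _ = ENNReal.ofReal (log (1 + θ * a)) := by
        rw [ENNReal.tsum_ofReal_sub_succ hf (tendsto_log_one_add_div_mul hθ _), hf0]
    _ = ∫⁻ x in Iic a ∩ Icc 0 θ, ENNReal.ofReal (θ / (1 + θ * x)) := by
        rw [show Iic a ∩ Icc 0 θ = Icc 0 a by grind, lintegral_Icc_div_one_add_mul hθ.le le_rfl ha]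
        simp

theorem map_Tmap_gammaMeasure (hm : 0 < m) : (gammaMeasure m).map (Tmap m) = gammaMeasure m := by
  have hT := measurable_Tmap m
  have := isFiniteMeasure_gammaMeasure hm
  refine Measure.ext_of_Iic_of_compl_Icc (p := 0) (q := theta m) ?_ (gammaMeasure_compl_Icc m)
    ?_ fun a ha => ?_
  · rw [Measure.map_apply hT measurableSet_Icc.compl, preimage_compl,
      preimage_eq_univ_iff.2 fun _ ⟨x, hx⟩ => hx ▸ Tmap_mem_Icc hm x, compl_univ, measure_empty]
  · rw [Measure.map_apply hT MeasurableSet.univ, preimage_univ]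
  · rw [Measure.map_apply hT measurableSet_Iic, gammaMeasure_preimage_Iic hm ha.1 ha.2]

end gammaMeasure

theorem gamma_invariant_general (m : ℕ) (hm : 2 ≤ m) :
    ∀ A ⊆ Icc 0 (theta m), MeasurableSet A →
      gammaMeasure m (Tmap m ⁻¹' A) = gammaMeasure m A := by
  intro A _ hA
  rw [← Measure.map_apply (measurable_Tmap m) hA, map_Tmap_gammaMeasure (by omega)]

/-- γ_θ is invariant under T_θ: for every Borel A ⊆ [0,θ], γ_θ(T_θ⁻¹(A)) = γ_θ(A). -/
theorem gamma_invariant (m : ℕ) (hm : 2 ≤ m) (hns : ¬ IsSquare m) :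
    ∀ A ⊆ Icc 0 (theta m), MeasurableSet A →
      gammaMeasure m (Tmap m ⁻¹' A) = gammaMeasure m A :=
  gamma_invariant_general m hm
end

section
/- For every integer m ≥ 2, the constant q = m·Σ_{i≥m} ( m/(i³(i+1)) + (i+1−m)/(i(i+1)³) ) satisfies 0 < q < θ, where θ = 1/√m. -/
/-!
Each summand, as a function of `x = i ≥ m`, is at most `1/x² - 1/(x+1)²`: the difference is
`(x(x+1)² - m(2x+1)) / (x³(x+1)³) ≥ 0`. The series therefore telescopes to at most `1/m²`, so
`q ≤ 1/m < 1/√m`.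
-/

open MeasureTheory Real Set

/-- q = m·Σ_{i≥m} ( m/(i³(i+1)) + (i+1−m)/(i(i+1)³) ). -/
noncomputable def qConst (m : ℕ) : ℝ :=
  m * ∑' i : ℕ,
    ((m : ℝ) / (((i + m : ℕ) : ℝ) ^ 3 * (((i + m : ℕ) : ℝ) + 1)) +
      ((((i + m : ℕ) : ℝ) + 1 - (m : ℝ)) /
        (((i + m : ℕ) : ℝ) * (((i + m : ℕ) : ℝ) + 1) ^ 3)))

open Filter Topology

theorem Antitone.hasSum_sub_succ {f : ℕ → ℝ} {l : ℝ} (hf : Antitone f)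
    (hl : Tendsto f atTop (𝓝 l)) : HasSum (fun n ↦ f n - f (n + 1)) (f 0 - l) := by
  rw [hasSum_iff_tendsto_nat_of_nonneg (fun n ↦ sub_nonneg.2 (hf n.le_succ))]
  simp_rw [Finset.sum_range_sub']
  exact tendsto_const_nhds.sub hl

theorem hasSum_one_div_sq_sub_one_div_add_one_sq {m : ℕ} (hm : 0 < m) :
    HasSum (fun i : ℕ ↦ 1 / ((i + m : ℕ) : ℝ) ^ 2 - 1 / (((i + m : ℕ) : ℝ) + 1) ^ 2)
      (1 / (m : ℝ) ^ 2) := by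
  have hanti : Antitone fun i : ℕ ↦ 1 / ((i + m : ℕ) : ℝ) ^ 2 := fun a b hab ↦ by
    have : (0 : ℝ) < a + m := by positivity
    push_cast
    gcongr
  have hlim : Tendsto (fun i : ℕ ↦ 1 / ((i + m : ℕ) : ℝ) ^ 2) atTop (𝓝 0) := by
    simp only [one_div]
    refine tendsto_inv_atTop_zero.comp ((tendsto_pow_atTop two_ne_zero).comp ?_)
    exact tendsto_natCast_atTop_atTop.comp (tendsto_add_atTop_nat m)
  convert hanti.hasSum_sub_succ hlim using 2 with i
  · push_cast
    ring
  · simp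

noncomputable def qTerm (M x : ℝ) : ℝ :=
  M / (x ^ 3 * (x + 1)) + (x + 1 - M) / (x * (x + 1) ^ 3)

theorem qConst_eq_tsum_qTerm (m : ℕ) : qConst m = m * ∑' i : ℕ, qTerm m (i + m : ℕ) := rfl

theorem qTerm_pos {M x : ℝ} (hM : 0 < M) (hMx : M ≤ x) : 0 < qTerm M x := by
  have : 0 < x + 1 - M := by linarith
  have : 0 < x := by linarith
  unfold qTerm
  positivity

theorem qTerm_le_one_div_sq_sub {M x : ℝ} (hx : 0 < x) (hMx : M ≤ x) :
    qTerm M x ≤ 1 / x ^ 2 - 1 / (x + 1) ^ 2 := by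
  have hdiff : 1 / x ^ 2 - 1 / (x + 1) ^ 2 - qTerm M x
      = (x * (x + 1) ^ 2 - M * (2 * x + 1)) / (x ^ 3 * (x + 1) ^ 3) := by
    unfold qTerm
    field_simp
    ring
  have : M * (2 * x + 1) ≤ x * (2 * x + 1) := by gcongr
  have : 0 ≤ (x * (x + 1) ^ 2 - M * (2 * x + 1)) / (x ^ 3 * (x + 1) ^ 3) := by
    apply div_nonneg _ (by positivity)
    nlinarith [pow_pos hx 3]
  linarith

/-- For every integer m ≥ 2, the constant q satisfies 0 < q < θ where θ = 1/√m. -/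
theorem qConst_lt_theta (m : ℕ) (hm : 2 ≤ m) :
    0 < qConst m ∧ qConst m < theta m := by
  have hm0 : (0 : ℝ) < m := by exact_mod_cast (by omega : 0 < m)
  have hm_le : ∀ i : ℕ, (m : ℝ) ≤ (i + m : ℕ) := fun i ↦ by exact_mod_cast Nat.le_add_left m i
  have hpos : ∀ i : ℕ, 0 < qTerm m (i + m : ℕ) := fun i ↦ qTerm_pos hm0 (hm_le i)
  have htel := hasSum_one_div_sq_sub_one_div_add_one_sq (m := m) (by omega)
  have hle : ∀ i : ℕ, qTerm m (i + m : ℕ) ≤ _ := fun i ↦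
    qTerm_le_one_div_sq_sub (hm0.trans_le (hm_le i)) (hm_le i)
  have hsum : Summable fun i : ℕ ↦ qTerm m (i + m : ℕ) :=
    .of_nonneg_of_le (fun i ↦ (hpos i).le) hle htel.summable
  rw [qConst_eq_tsum_qTerm]
  constructor
  · exact mul_pos hm0 (hsum.tsum_pos (fun i ↦ (hpos i).le) 0 (hpos 0))
  · calc (m : ℝ) * ∑' i : ℕ, qTerm m (i + m : ℕ)
        ≤ m * (1 / (m : ℝ) ^ 2) := by
          gcongr
          exact htel.tsum_eq ▸ hsum.tsum_le_tsum hle htel.summable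
      _ = 1 / m := by field_simp
      _ < theta m :=
          one_div_lt_one_div_of_lt (sqrt_pos.2 hm0) (sqrt_lt_self_iff.2 (by exact_mod_cast hm))
end
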